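/- arXiv:0809.1193 — 4 statements merged into one kernel-verified Lean document; each statement's English description precedes it below -/
import Mathlib

section
/- Let U ⊆ ℂ be a nonempty bounded open set, x ∈ U, and suppose closedBall(y, ε) (with ε > 0) is a closed ball of maximal radius among all closed balls contained in closure(U) and containing x, i.e., x ∈ closedBall(y, ε) ⊆ closure(U) and for every y', ε' with x ∈ closedBall(y', ε') ⊆ closure(U) one has ε' ≤ ε. Then the sphere S = {w : |w − y| = ε} intersects the frontier of U in at least two points. -/
/-!
Let `W = ball y ε ∪ U`, an open subset of `closure U`. A closed ball of radius `ε` containing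
`x` and contained in `W` is compact, so a slightly larger concentric ball still lies in `W`,
contradicting maximality. If the sphere met `frontier U` in at most one point `a`, every other
point of the sphere would lie in `U`; translating the ball a little in the direction `x - a`,
which points strictly inward at `a`, keeps `x` inside (by convexity) and moves the part of the
sphere near `a` into the open ball, while the rest stays in `U` by compactness.
-/

open Metric Filter Topology Set
open scoped RealInnerProductSpace

section InnerProductSpace

variable {E : Type*} [NormedAddCommGroup E] [InnerProductSpace ℝ E]

theorem inner_sub_sub_neg_of_dist_le {x a y : E} (hxa : x ≠ a) (h : dist x y ≤ dist a y) :
    ⟪x - a, a - y⟫ < 0 := by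
  have hexpand : ‖x - y‖ ^ 2 = ‖x - a‖ ^ 2 + 2 * ⟪x - a, a - y⟫ + ‖a - y‖ ^ 2 := by
    rw [← norm_add_sq_real, sub_add_sub_cancel]
  have hle : ‖x - y‖ ^ 2 ≤ ‖a - y‖ ^ 2 := by
    rw [← dist_eq_norm, ← dist_eq_norm]; gcongr
  have hpos : 0 < ‖x - a‖ := norm_pos_iff.2 (sub_ne_zero.2 hxa)
  nlinarith

theorem mem_closedBall_add_smul_sub {x a y : E} {ε t : ℝ} (hx : x ∈ closedBall y ε)
    (ha : a ∈ closedBall y ε) (ht₀ : 0 ≤ t) (ht₁ : t ≤ 1) :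
    x ∈ closedBall (y + t • (x - a)) ε := by
  have hcombo : (1 - t) • x + t • a ∈ closedBall y ε :=
    convex_closedBall y ε hx ha (by linarith) ht₀ (by ring)
  rw [mem_closedBall, dist_eq_norm] at hcombo ⊢
  convert hcombo using 2
  module

theorem dist_add_smul_lt {z y v : E} {ε t : ℝ} (hz : dist z y ≤ ε) (ht : 0 < t)
    (hv : 2 * ⟪v, z - y⟫ + t * ‖v‖ ^ 2 < 0) : dist (z + t • v) y < ε := by
  have hexpand :
      ‖z + t • v - y‖ ^ 2 = ‖z - y‖ ^ 2 + t * (2 * ⟪v, z - y⟫ + t * ‖v‖ ^ 2) := by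
    rw [add_sub_right_comm, norm_add_sq_real, real_inner_smul_right, real_inner_comm,
      norm_smul, Real.norm_of_nonneg ht.le]
    ring
  have hε : 0 ≤ ε := dist_nonneg.trans hz
  rw [dist_eq_norm] at hz ⊢
  refine lt_of_pow_lt_pow_left₀ 2 hε ?_
  nlinarith [mul_neg_of_pos_of_neg ht hv, pow_le_pow_left₀ (norm_nonneg _) hz 2]

variable [ProperSpace E]

theorem eventually_closedBall_add_smul_subset {W : Set E} {y a v : E} {ε : ℝ}
    (hW : IsOpen W) (hball : ball y ε ⊆ W) (hsphere : sphere y ε \ {a} ⊆ W) (hv : ⟪v, a - y⟫ < 0) :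
    ∀ᶠ t in 𝓝[>] (0 : ℝ), closedBall (y + t • v) ε ⊆ W := by
  obtain ⟨r, hr, hr_inward⟩ : ∃ r > 0, ball a r ⊆ {z | 2 * ⟪v, z - y⟫ < ⟪v, a - y⟫} :=
    Metric.mem_nhds_iff.1 <| (isOpen_lt (by fun_prop) continuous_const).mem_nhds
      (show 2 * ⟪v, a - y⟫ < ⟪v, a - y⟫ by linarith)
  have hC : closedBall y ε \ ball a r ⊆ W := by
    rintro z ⟨hzB, hza⟩
    rcases (mem_closedBall.1 hzB).lt_or_eq with hlt | heq
    · exact hball hlt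
    · refine hsphere ⟨heq, fun hz => hza ?_⟩
      rw [mem_singleton_iff.1 hz]
      exact mem_ball_self hr
  obtain ⟨δ, hδ, hδW⟩ :=
    (isCompact_closedBall y ε).diff isOpen_ball |>.exists_cthickening_subset_open hW hC
  have hsmall : ∀ᶠ t in 𝓝 (0 : ℝ), t * ‖v‖ < δ ∧ t * ‖v‖ ^ 2 < -⟪v, a - y⟫ := by
    refine (Tendsto.eventually_lt_const (v := 0) hδ ?_).and
      (Tendsto.eventually_lt_const (v := 0) (by linarith) ?_)
    all_goals simpa using ((continuous_mul_const _).tendsto (0 : ℝ))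
  filter_upwards [self_mem_nhdsWithin, eventually_nhdsWithin_of_eventually_nhds hsmall]
    with t (ht : 0 < t) ⟨htδ, htv⟩
  intro w hw
  set z := w - t • v
  have hzy : dist z y ≤ ε := (dist_sub_eq_dist_add_left w _ y).trans_le hw
  by_cases hza : z ∈ ball a r
  · have hzw : z + t • v = w := sub_add_cancel w _
    refine hball (hzw ▸ dist_add_smul_lt hzy ht ?_)
    have : 2 * ⟪v, z - y⟫ < ⟪v, a - y⟫ := hr_inward hza
    linarith
  · refine hδW (mem_cthickening_of_dist_le w z δ _ ⟨hzy, hza⟩ ?_)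
    rw [dist_eq_norm, sub_sub_cancel, norm_smul, Real.norm_of_nonneg ht.le]
    exact htδ.le

theorem exists_pos_closedBall_add_subset {W : Set E} {y : E} {ε : ℝ} (hW : IsOpen W)
    (hε : 0 ≤ ε) (h : closedBall y ε ⊆ W) : ∃ δ > 0, closedBall y (ε + δ) ⊆ W := by
  obtain ⟨δ, hδ, hδW⟩ := (isCompact_closedBall y ε).exists_cthickening_subset_open hW h
  exact ⟨δ, hδ, by rwa [cthickening_closedBall hδ.le hε, add_comm] at hδW⟩

end InnerProductSpace

theorem maximal_ball_sphere_meets_frontier_twice_general (U : Set ℂ) (hU : IsOpen U)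
    (x y : ℂ) (ε : ℝ)
    (hx : x ∈ U)
    (hxB : x ∈ Metric.closedBall y ε) (hBU : Metric.closedBall y ε ⊆ closure U)
    (hmax : ∀ (y' : ℂ) (ε' : ℝ), x ∈ Metric.closedBall y' ε' →
      Metric.closedBall y' ε' ⊆ closure U → ε' ≤ ε) :
    ∃ a b : ℂ, a ≠ b ∧ a ∈ Metric.sphere y ε ∩ frontier U ∧
      b ∈ Metric.sphere y ε ∩ frontier U := by
  set W := ball y ε ∪ U
  have hW : IsOpen W := isOpen_ball.union hU
  have hWU : W ⊆ closure U := union_subset (ball_subset_closedBall.trans hBU) subset_closure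
  have not_subset_W : ∀ y', x ∈ closedBall y' ε → ¬closedBall y' ε ⊆ W := by
    intro y' hx' hsub
    obtain ⟨δ, hδ, hδW⟩ := exists_pos_closedBall_add_subset hW (dist_nonneg.trans hx') hsub
    linarith [hmax y' (ε + δ) (closedBall_subset_closedBall (by linarith) hx') (hδW.trans hWU)]
  have hsphereU : sphere y ε \ frontier U ⊆ U := fun z hz => by
    rw [← hU.interior_eq, ← closure_sdiff_frontier]
    exact ⟨hBU (sphere_subset_closedBall hz.1), hz.2⟩
  by_contra! hcon
  rcases (sphere y ε ∩ frontier U).eq_empty_or_nonempty with hempty | ⟨a, ha, haF⟩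
  · refine not_subset_W y hxB ?_
    rw [← ball_union_sphere]
    exact union_subset_union_right _ fun z hz =>
      hsphereU ⟨hz, fun hzF => hempty.subset ⟨hz, hzF⟩⟩
  · have hxa : x ≠ a := fun h => (hU.frontier_eq ▸ haF).2 (h ▸ hx)
    have hsphere : sphere y ε \ {a} ⊆ W := fun z ⟨hz, hza⟩ =>
      Or.inr (hsphereU ⟨hz, fun hzF => hcon z a hza ⟨hz, hzF⟩ ⟨ha, haF⟩⟩)
    have hinward := inner_sub_sub_neg_of_dist_le hxa (hxB.trans_eq ha.symm)
    obtain ⟨t, hsub, ht₀, ht₁⟩ :=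
      ((eventually_closedBall_add_smul_subset hW subset_union_left hsphere hinward).and
        (Ioc_mem_nhdsGT one_pos)).exists
    exact not_subset_W _
      (mem_closedBall_add_smul_sub hxB (sphere_subset_closedBall ha) ht₀.le ht₁) hsub

/-- A closed ball of maximal radius among those containing `x` and contained
in `closure U` meets the frontier of `U` in at least two points. -/
theorem maximal_ball_sphere_meets_frontier_twice (U : Set ℂ) (hU : IsOpen U)
    (hUb : Bornology.IsBounded U) (hUne : U.Nonempty) (x y : ℂ) (ε : ℝ) (hε : 0 < ε)
    (hx : x ∈ U)
    (hxB : x ∈ Metric.closedBall y ε) (hBU : Metric.closedBall y ε ⊆ closure U)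
    (hmax : ∀ (y' : ℂ) (ε' : ℝ), x ∈ Metric.closedBall y' ε' →
      Metric.closedBall y' ε' ⊆ closure U → ε' ≤ ε) :
    ∃ a b : ℂ, a ≠ b ∧ a ∈ Metric.sphere y ε ∩ frontier U ∧
      b ∈ Metric.sphere y ε ∩ frontier U :=
  maximal_ball_sphere_meets_frontier_twice_general U hU x y ε hx hxB hBU hmax
end

section
/- Let U ⊆ ℂ be a nonempty bounded open set, y ∈ ℂ, ε > 0, and x ∈ closedBall(y, ε) ⊆ closure(U). If the sphere {w : |w − y| = ε} is disjoint from the frontier of U, then there exists ε' > ε with x ∈ closedBall(y, ε') ⊆ closure(U). -/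
/-- If a closed ball contained in `closure U` (and containing `x`) has
bounding sphere disjoint from the frontier of `U`, then its radius can be enlarged. -/
theorem ball_disjoint_frontier_enlarge (U : Set ℂ) (hU : IsOpen U)
    (hUb : Bornology.IsBounded U) (hUne : U.Nonempty) (x y : ℂ) (ε : ℝ) (hε : 0 < ε)
    (hxB : x ∈ Metric.closedBall y ε) (hBU : Metric.closedBall y ε ⊆ closure U)
    (hdisj : Disjoint (Metric.sphere y ε) (frontier U)) :
    ∃ ε' : ℝ, ε < ε' ∧ x ∈ Metric.closedBall y ε' ∧
      Metric.closedBall y ε' ⊆ closure U := by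
  have hsub : Metric.sphere y ε ⊆ U := by
    intro w hw
    have hwcl : w ∈ closure U := hBU (Metric.sphere_subset_closedBall hw)
    by_contra hwu
    exact Set.disjoint_left.mp hdisj hw (by rw [hU.frontier_eq]; exact ⟨hwcl, hwu⟩)
  obtain ⟨δ, hδ, hthick⟩ :=
    (isCompact_sphere y ε).exists_thickening_subset_open hU hsub
  refine ⟨ε + δ/2, by linarith, Metric.closedBall_subset_closedBall (by linarith) hxB, ?_⟩
  intro w hw
  rcases le_or_gt (dist w y) ε with h | h
  · exact hBU (Metric.mem_closedBall.mpr h)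
  · have hd : dist w y ≤ ε + δ/2 := Metric.mem_closedBall.mp hw
    have hdpos : 0 < dist w y := lt_trans hε h
    have hwth : w ∈ Metric.thickening δ (Metric.sphere y ε) := by
      refine Metric.mem_thickening_iff.mpr ⟨y + (ε / dist w y) • (w - y), ?_, ?_⟩
      · have : dist (y + (ε / dist w y) • (w - y)) y = ε := by
          rw [dist_eq_norm]
          have h1 : y + (ε / dist w y) • (w - y) - y = (ε / dist w y) • (w - y) := by
            ring_nf
          rw [h1, norm_smul, Real.norm_eq_abs, abs_of_pos (div_pos hε hdpos)]
          rw [← dist_eq_norm, div_mul_cancel₀]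
          exact ne_of_gt hdpos
        simpa [Metric.mem_sphere] using this
      · have h2 : w - (y + (ε / dist w y) • (w - y)) = (1 - ε / dist w y) • (w - y) := by
          rw [sub_smul, one_smul]; ring_nf
        rw [dist_eq_norm, h2, norm_smul, Real.norm_eq_abs]
        have hle : ε / dist w y ≤ 1 := by
          rw [div_le_one hdpos]; exact le_of_lt h
        rw [abs_of_nonneg (by linarith), ← dist_eq_norm]
        have : (1 - ε / dist w y) * dist w y = dist w y - ε := by
          field_simp
        rw [this]; linarith
    exact subset_closure (hthick hwth)
end

section
/- Let T : [0, 1/2] → [0, 1/2] be the full tent map T(x) = min(2x, 1 − 2x). Then for every x ∈ (0, 1/2] there exists m ≥ 0 such that T^m(x) ∈ [1/3, 1/2], where T^m denotes the m-th iterate of T. -/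
private lemma tent_base (T : ℝ → ℝ) (hT : ∀ x : ℝ, T x = min (2 * x) (1 - 2 * x))
    (x : ℝ) (hx : x ∈ Set.Ioc (0 : ℝ) (1 / 2)) (h : (1/4 : ℝ) ≤ x) :
    ∃ m : ℕ, T^[m] x ∈ Set.Icc (1 / 3 : ℝ) (1 / 2) := by
  by_cases h3 : (1/3 : ℝ) ≤ x
  · exact ⟨0, h3, hx.2⟩
  · refine ⟨1, ?_⟩
    have hmin : T x = 1 - 2 * x := by
      rw [hT, min_eq_right]; linarith
    simp only [Function.iterate_one, hmin, Set.mem_Icc]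
    constructor <;> linarith [hx.2]

private lemma tent_aux (T : ℝ → ℝ) (hT : ∀ x : ℝ, T x = min (2 * x) (1 - 2 * x)) :
    ∀ n : ℕ, ∀ x : ℝ, x ∈ Set.Ioc (0 : ℝ) (1 / 2) → (1/4 : ℝ) ≤ 2 ^ n * x →
      ∃ m : ℕ, T^[m] x ∈ Set.Icc (1 / 3 : ℝ) (1 / 2) := by
  intro n
  induction n with
  | zero =>
    intro x hx h
    simp only [pow_zero, one_mul] at h
    exact tent_base T hT x hx h
  | succ n ih =>
    intro x hx h
    by_cases h4 : (1/4 : ℝ) ≤ x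
    · exact tent_base T hT x hx h4
    · have hTx : T x = 2 * x := by
        rw [hT, min_eq_left]; linarith
      have hx2 : (2 * x) ∈ Set.Ioc (0 : ℝ) (1 / 2) := by
        constructor <;> [linarith [hx.1]; linarith]
      have h2 : (1/4 : ℝ) ≤ 2 ^ n * (2 * x) := by
        rw [pow_succ] at h; linarith
      obtain ⟨m, hm⟩ := ih (2 * x) hx2 h2
      exact ⟨m + 1, by rwa [Function.iterate_succ_apply, hTx]⟩

/-- For the full tent map `T(x) = min (2x) (1-2x)` on `[0, 1/2]` and any
`x ∈ (0, 1/2]`, some iterate of `T` takes `x` into `[1/3, 1/2]`. -/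
theorem tent_map_reaches_third (T : ℝ → ℝ) (hT : ∀ x : ℝ, T x = min (2 * x) (1 - 2 * x))
    (x : ℝ) (hx : x ∈ Set.Ioc (0 : ℝ) (1 / 2)) :
    ∃ m : ℕ, T^[m] x ∈ Set.Icc (1 / 3 : ℝ) (1 / 2) := by
  obtain ⟨n, hn⟩ := pow_unbounded_of_one_lt (1 / (4 * x)) (by norm_num : (1:ℝ) < 2)
  have hx0 := hx.1
  have h : (1/4 : ℝ) ≤ 2 ^ n * x := by
    rw [div_lt_iff₀ (by positivity)] at hn
    nlinarith
  exact tent_aux T hT n x hx h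
end

section
/- Let σ(θ) = 2θ be the angle doubling map on the circle ℝ/ℤ with quotient metric d. Suppose α, β ∈ ℝ/ℤ satisfy α ≠ β and σ^n(α) ≠ σ^n(β) + 1/2 for every n ≥ 0. Then there exists m ≥ 0 such that 1/3 ≤ d(σ^m(α), σ^m(β)) < 1/2. -/
private lemma ac_rep (y : AddCircle (1:ℝ)) :
    ∃ r : ℝ, y = (r : AddCircle (1:ℝ)) ∧ |r| = ‖y‖ ∧ |r| ≤ 1/2 := by
  induction y using QuotientAddGroup.induction_on with
  | H s =>
    refine ⟨s - round s, ?_, ?_, abs_sub_round s⟩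
    · have h0 : ((round s : ℝ) : AddCircle (1:ℝ)) = 0 := by
        rw [AddCircle.coe_eq_zero_iff]; exact ⟨round s, by simp⟩
      have := QuotientAddGroup.mk_sub (AddSubgroup.zmultiples (1:ℝ)) s (round s)
      rw [show ((s - round s : ℝ) : AddCircle (1:ℝ)) = _ from this, h0, sub_zero]
    · rw [AddCircle.norm_eq]; simp

private lemma ac_shift (x : ℝ) : ((x - 1 : ℝ) : AddCircle (1:ℝ)) = (x : AddCircle (1:ℝ)) := by
  have h0 : ((1 : ℝ) : AddCircle (1:ℝ)) = 0 := by
    rw [AddCircle.coe_eq_zero_iff]; exact ⟨1, by simp⟩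
  rw [QuotientAddGroup.mk_sub (AddSubgroup.zmultiples (1:ℝ)) x 1]
  rw [show ((1:ℝ) : AddCircle (1:ℝ)) = 0 from h0, sub_zero]

private lemma ac_two_smul (r : ℝ) :
    (2 : ℕ) • ((r : AddCircle (1:ℝ))) = ((2 * r : ℝ) : AddCircle (1:ℝ)) := by
  rw [two_mul, two_smul, ← QuotientAddGroup.mk_add]

private lemma ac_norm_abs {r : ℝ} (hr : |r| ≤ 1/2) : ‖(r : AddCircle (1:ℝ))‖ = |r| := by
  rw [AddCircle.norm_coe_eq_abs_iff (1:ℝ) one_ne_zero]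
  simpa using hr

private lemma ac_half {y : AddCircle (1:ℝ)} (hy : ‖y‖ = 1/2) :
    y = ((1/2 : ℝ) : AddCircle (1:ℝ)) := by
  obtain ⟨r, rfl, hra, hrb⟩ := ac_rep y
  rw [hy] at hra
  rcases abs_eq (by norm_num : (0:ℝ) ≤ 1/2) |>.mp hra with h | h
  · rw [h]
  · rw [h, show (-(1/2) : ℝ) = 1/2 - 1 by norm_num, ac_shift]

private lemma ac_double_small {y : AddCircle (1:ℝ)} (hy : ‖y‖ ≤ 1/4) :
    ‖(2:ℕ) • y‖ = 2 * ‖y‖ := by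
  obtain ⟨r, rfl, hra, hrb⟩ := ac_rep y
  rw [ac_two_smul, ac_norm_abs (by rw [abs_mul]; rw [hra] at *; simp; linarith), abs_mul, hra]
  norm_num

private lemma ac_double_big {y : AddCircle (1:ℝ)} (hy : 1/4 ≤ ‖y‖) :
    ‖(2:ℕ) • y‖ = 1 - 2 * ‖y‖ := by
  obtain ⟨r, rfl, hra, hrb⟩ := ac_rep y
  rw [← hra] at hy ⊢
  rw [ac_two_smul]
  rcases le_or_gt 0 r with hr0 | hr0
  · rw [abs_of_nonneg hr0] at hy hrb
    rw [← ac_shift (2*r), ac_norm_abs (by rw [abs_le]; constructor <;> linarith),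
      abs_of_nonpos (by linarith), abs_of_nonneg hr0]
    ring
  · rw [abs_of_neg hr0] at hy hrb
    rw [show (2*r : ℝ) = (2*r + 1) - 1 by ring, ac_shift,
      ac_norm_abs (by rw [abs_le]; constructor <;> linarith),
      abs_of_nonneg (by linarith), abs_of_neg hr0]
    ring

/-- For the angle doubling map `σ θ = 2θ` on the circle `ℝ/ℤ`, if `α ≠ β`
and no iterate satisfies `σⁿ α = σⁿ β + 1/2`, then some iterate has
`1/3 ≤ d(σᵐ α, σᵐ β) < 1/2`. -/
theorem doubling_separates (α β : AddCircle (1 : ℝ)) (hne : α ≠ β)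
    (h : ∀ n : ℕ, (fun θ : AddCircle (1 : ℝ) => 2 • θ)^[n] α ≠
      (fun θ : AddCircle (1 : ℝ) => 2 • θ)^[n] β + ((1 / 2 : ℝ) : AddCircle (1 : ℝ))) :
    ∃ m : ℕ,
      1 / 3 ≤ dist ((fun θ : AddCircle (1 : ℝ) => 2 • θ)^[m] α)
        ((fun θ : AddCircle (1 : ℝ) => 2 • θ)^[m] β) ∧
      dist ((fun θ : AddCircle (1 : ℝ) => 2 • θ)^[m] α)
        ((fun θ : AddCircle (1 : ℝ) => 2 • θ)^[m] β) < 1 / 2 := by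
  have itf : ∀ (n : ℕ) (θ : AddCircle (1:ℝ)),
      (fun θ : AddCircle (1 : ℝ) => 2 • θ)^[n] θ = ((2:ℕ)^n) • θ := by
    intro n
    induction n with
    | zero => intro θ; simp
    | succ n ih =>
      intro θ
      rw [Function.iterate_succ_apply', ih θ]
      show (2:ℕ) • ((2:ℕ)^n • θ) = _
      rw [smul_smul, ← pow_succ']
  set y := α - β with hy
  have hy0 : y ≠ 0 := sub_ne_zero.mpr hne
  have hd : ∀ n : ℕ, dist ((fun θ : AddCircle (1 : ℝ) => 2 • θ)^[n] α)
      ((fun θ : AddCircle (1 : ℝ) => 2 • θ)^[n] β) = ‖((2:ℕ)^n) • y‖ := by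
    intro n
    rw [itf, itf, dist_eq_norm, hy, smul_sub]
  have hzsucc : ∀ n : ℕ, ((2:ℕ)^(n+1)) • y = (2:ℕ) • (((2:ℕ)^n) • y) := by
    intro n; rw [smul_smul, ← pow_succ']
  have hne2 : ∀ n : ℕ, ((2:ℕ)^n) • y ≠ ((1/2 : ℝ) : AddCircle (1:ℝ)) := by
    intro n hc
    apply h n
    rw [itf, itf]
    rw [hy, smul_sub] at hc
    exact sub_eq_iff_eq_add'.mp hc
  have hlthalf : ∀ n : ℕ, ‖((2:ℕ)^n) • y‖ < 1/2 := by
    intro n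
    have hle : ‖((2:ℕ)^n) • y‖ ≤ 1/2 := by
      have := AddCircle.norm_le_half_period (p := 1) (x := ((2:ℕ)^n) • y) one_ne_zero
      simpa using this
    rcases lt_or_eq_of_le hle with hl | hl
    · exact hl
    · exact absurd (ac_half hl) (hne2 n)
  have hex : ∃ n : ℕ, 1/4 ≤ ‖((2:ℕ)^n) • y‖ := by
    by_contra hc
    push_neg at hc
    have hgrow : ∀ n : ℕ, ‖((2:ℕ)^n) • y‖ = 2^n * ‖y‖ := by
      intro n
      induction n with
      | zero => simp
      | succ n ih =>
        rw [hzsucc, ac_double_small (le_of_lt (hc n)), ih, pow_succ]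
        ring
    have hypos : (0:ℝ) < ‖y‖ := norm_pos_iff.mpr hy0
    obtain ⟨n, hn⟩ := pow_unbounded_of_one_lt ((1/4)/‖y‖) (by norm_num : (1:ℝ) < 2)
    have := hc n
    rw [hgrow n] at this
    rw [div_lt_iff₀ hypos] at hn
    linarith
  obtain ⟨n, hn⟩ := hex
  rcases le_or_gt (1/3) ‖((2:ℕ)^n) • y‖ with h3 | h3
  · exact ⟨n, by rw [hd]; exact ⟨h3, hlthalf n⟩⟩
  · refine ⟨n+1, ?_, by rw [hd]; exact hlthalf (n+1)⟩
    rw [hd, hzsucc, ac_double_big hn]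
    linarith
end
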